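/- Let f(t,p) ≥ 0 with t ↦ ‖f(t,·)‖_{L¹} continuous, and let H_f(t,φ) = e^{2φ} ∫_{ℝ³} f(t,p)/√(e^{2φ}+|p|²) dp. Then for all φ₁, φ₂ ∈ ℝ, |H_f(t,φ₁) − H_f(t,φ₂)| ≤ 2 ‖f(t,·)‖_{L¹} e^{max(φ₁,φ₂)} |φ₁ − φ₂|. -/

import Mathlib

open Real MeasureTheory

/-!
For fixed `a = |p|² ≥ 0` the integrand weight `w(φ) = e^{2φ} / √(e^{2φ} + a)` has
`w'(φ) = e^{2φ} (s² + a) / s³` with `s = √(e^{2φ} + a)`; since `a ≤ s²` and `e^φ ≤ s` this lies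
in `[0, 2e^φ]`, so the mean value theorem bounds `|w(φ₁) - w(φ₂)|` by `2e^{max φ₁ φ₂} |φ₁ - φ₂|`.
Integrating against `f ≥ 0` gives the claim.
-/

noncomputable def relativisticWeight (a φ : ℝ) : ℝ :=
  exp (2 * φ) / √(exp (2 * φ) + a)

section relativisticWeight

variable {a : ℝ}

lemma sqrt_exp_two_mul_add_pos (ha : 0 ≤ a) (φ : ℝ) : 0 < √(exp (2 * φ) + a) :=
  Real.sqrt_pos.mpr (by positivity)

lemma exp_le_sqrt_exp_two_mul_add (ha : 0 ≤ a) (φ : ℝ) : exp φ ≤ √(exp (2 * φ) + a) :=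
  (Real.le_sqrt (exp_pos φ).le (by positivity)).mpr <| by
    rw [← exp_nat_mul]; push_cast; linarith

lemma relativisticWeight_nonneg (a φ : ℝ) : 0 ≤ relativisticWeight a φ := by
  unfold relativisticWeight; positivity

lemma relativisticWeight_le_exp (ha : 0 ≤ a) (φ : ℝ) : relativisticWeight a φ ≤ exp φ := by
  rw [relativisticWeight, div_le_iff₀ (sqrt_exp_two_mul_add_pos ha φ)]
  calc exp (2 * φ) = exp φ * exp φ := by rw [two_mul, exp_add]
    _ ≤ exp φ * √(exp (2 * φ) + a) := by gcongr; exact exp_le_sqrt_exp_two_mul_add ha φ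

lemma hasDerivAt_relativisticWeight (ha : 0 ≤ a) (φ : ℝ) :
    HasDerivAt (relativisticWeight a)
      (exp (2 * φ) * (exp (2 * φ) + 2 * a) / √(exp (2 * φ) + a) ^ 3) φ := by
  have hexp : HasDerivAt (fun φ => exp (2 * φ)) (2 * exp (2 * φ)) φ := by
    simpa [mul_comm] using ((hasDerivAt_id φ).const_mul 2).exp
  have hs := sqrt_exp_two_mul_add_pos ha φ
  refine (hexp.div ((hexp.add_const a).sqrt (by positivity)) hs.ne').congr_deriv ?_
  have hsq : √(exp (2 * φ) + a) ^ 2 = exp (2 * φ) + a := sq_sqrt (by positivity)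
  field_simp
  rw [hsq]
  ring

lemma abs_deriv_relativisticWeight_le (ha : 0 ≤ a) (φ : ℝ) :
    |deriv (relativisticWeight a) φ| ≤ 2 * exp φ := by
  rw [(hasDerivAt_relativisticWeight ha φ).deriv]
  set s := √(exp (2 * φ) + a)
  have hs : 0 < s := sqrt_exp_two_mul_add_pos ha φ
  have hsq : s ^ 2 = exp (2 * φ) + a := sq_sqrt (by positivity)
  have hes : exp φ ≤ s := exp_le_sqrt_exp_two_mul_add ha φ
  rw [abs_of_nonneg (by positivity), div_le_iff₀ (by positivity)]
  calc exp (2 * φ) * (exp (2 * φ) + 2 * a)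
      ≤ exp φ * s * (2 * s ^ 2) := by
        gcongr
        · rw [two_mul, exp_add]; gcongr
        · linarith [exp_pos (2 * φ)]
    _ = 2 * exp φ * s ^ 3 := by ring

lemma abs_relativisticWeight_sub_le (ha : 0 ≤ a) (φ₁ φ₂ : ℝ) :
    |relativisticWeight a φ₁ - relativisticWeight a φ₂| ≤ 2 * exp (max φ₁ φ₂) * |φ₁ - φ₂| := by
  have hbound : ∀ φ ∈ Set.uIcc φ₂ φ₁, ‖deriv (relativisticWeight a) φ‖ ≤ 2 * exp (max φ₁ φ₂) := by
    intro φ hφ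
    have hle : φ ≤ max φ₁ φ₂ := by
      rw [Set.uIcc_comm] at hφ
      exact hφ.2.trans (max_le le_sup_left le_sup_right)
    exact (abs_deriv_relativisticWeight_le ha φ).trans (by gcongr)
  simpa only [Real.norm_eq_abs] using (convex_uIcc φ₂ φ₁).norm_image_sub_le_of_norm_deriv_le
    (fun φ _ => (hasDerivAt_relativisticWeight ha φ).differentiableAt) hbound
    Set.left_mem_uIcc Set.right_mem_uIcc

variable {α : Type*} [MeasurableSpace α] {μ : Measure α} {f g : α → ℝ}

lemma measurable_relativisticWeight_comp (hg : Measurable g) (φ : ℝ) :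
    Measurable fun p => relativisticWeight (g p) φ := by
  unfold relativisticWeight; fun_prop

lemma integrable_mul_relativisticWeight_comp (hf : Integrable f μ) (hg : Measurable g)
    (hg0 : ∀ p, 0 ≤ g p) (φ : ℝ) : Integrable (fun p => f p * relativisticWeight (g p) φ) μ :=
  hf.mul_bdd (measurable_relativisticWeight_comp hg φ).aestronglyMeasurable <|
    ae_of_all _ fun p => by
      rw [norm_of_nonneg (relativisticWeight_nonneg _ φ)]
      exact relativisticWeight_le_exp (hg0 p) φ

lemma abs_integral_mul_relativisticWeight_sub_le (hf0 : 0 ≤ᵐ[μ] f) (hf : Integrable f μ)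
    (hg : Measurable g) (hg0 : ∀ p, 0 ≤ g p) (φ₁ φ₂ : ℝ) :
    |∫ p, f p * relativisticWeight (g p) φ₁ ∂μ - ∫ p, f p * relativisticWeight (g p) φ₂ ∂μ|
      ≤ 2 * (∫ p, f p ∂μ) * exp (max φ₁ φ₂) * |φ₁ - φ₂| := by
  have hint := integrable_mul_relativisticWeight_comp hf hg hg0
  rw [← integral_sub (hint φ₁) (hint φ₂)]
  calc |∫ p, f p * relativisticWeight (g p) φ₁ - f p * relativisticWeight (g p) φ₂ ∂μ|
      ≤ ∫ p, |f p * relativisticWeight (g p) φ₁ - f p * relativisticWeight (g p) φ₂| ∂μ :=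
        abs_integral_le_integral_abs
    _ ≤ ∫ p, f p * (2 * exp (max φ₁ φ₂) * |φ₁ - φ₂|) ∂μ := by
        refine integral_mono_ae ((hint φ₁).sub (hint φ₂)).abs (hf.mul_const _) ?_
        filter_upwards [hf0] with p hp
        rw [← mul_sub, abs_mul, abs_of_nonneg hp]
        exact mul_le_mul_of_nonneg_left (abs_relativisticWeight_sub_le (hg0 p) φ₁ φ₂) hp
    _ = 2 * (∫ p, f p ∂μ) * exp (max φ₁ φ₂) * |φ₁ - φ₂| := by
        rw [integral_mul_const]; ring

end relativisticWeight

theorem stmt_2 (f : ℝ → EuclideanSpace ℝ (Fin 3) → ℝ)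
    (hf_nonneg : ∀ t p, 0 ≤ f t p)
    (hf_int : ∀ t, Integrable (f t))
    (H : ℝ → ℝ → ℝ)
    (hH : ∀ t φ, H t φ = exp (2 * φ) * ∫ p, f t p / Real.sqrt (exp (2 * φ) + ‖p‖ ^ 2))
    (t φ₁ φ₂ : ℝ) :
    |H t φ₁ - H t φ₂| ≤ 2 * (∫ p, f t p) * exp (max φ₁ φ₂) * |φ₁ - φ₂| := by
  have hH_weight : ∀ φ, H t φ = ∫ p, f t p * relativisticWeight (‖p‖ ^ 2) φ := by
    intro φ
    rw [hH, ← integral_const_mul]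
    congr 1 with p
    rw [relativisticWeight]
    ring
  rw [hH_weight, hH_weight]
  exact abs_integral_mul_relativisticWeight_sub_le (ae_of_all _ (hf_nonneg t)) (hf_int t)
    (by fun_prop) (fun p => sq_nonneg ‖p‖) φ₁ φ₂
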